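/- For all positive constants c_* and C_* there exists a constant C such that for all sufficiently large n the following holds. Let G be a graph on the vertex set {0,…,n−1} and let 𝒢 be a connected component of G satisfying: |𝒢| ≥ c_*·n; every vertex of 𝒢 has degree at most C_*·log n; and Φ_𝒢 ≥ c_*·(log n)^{−2}. Consider the continuous-time random walk on 𝒢 with generator matrix Q given by Q(x,y) = 1/(n−1) whenever {x,y} is an edge of 𝒢, Q(x,y) = 0 for distinct non-adjacent x,y ∈ 𝒢, and Q(x,x) = −deg_𝒢(x)/(n−1), with transition probabilities p_t = exp(t·Q). Then there exists t ≤ C·n·(log n)^6 such that max_{x,y ∈ 𝒢} |1 − |𝒢|·p_t(x,y)| ≤ 1/8. -/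

import Mathlib

/-!
Up to the factor `1/(n-1)`, the generator is minus the Laplacian of the component. Cheeger's
inequality — the co-area formula applied to the level sets of `f²`, Cauchy–Schwarz, and a split of
`f` at a degree-weighted median — bounds its spectral gap below by `Φ²/2 ≥ c⋆²/(2 (log n)⁴)`,
since in a connected graph on at least two vertices every degree is at least `1`. In an
orthonormal eigenbasis of the generator each eigenvector is either constant (eigenvalue `0`) or
orthogonal to the constants (eigenvalue `≤ -γ`), so `|p_t(x,y) - 1/N| ≤ e^{-γt}`, which is
`1/(8N)` at `t = log(8N)/γ = O(n (log n)⁵)`.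
-/

open scoped Classical

/-- `d_H(S)`: the sum of the degrees of the vertices of `S`. -/
noncomputable def degSum {α : Type*} [Fintype α] (H : SimpleGraph α) (S : Set α) : ℝ :=
  ∑ x : α, if x ∈ S then ((H.neighborSet x).ncard : ℝ) else 0

/-- `|∂S|`: the number of edges of `H` with exactly one endpoint in `S`. -/
noncomputable def edgeBoundary {α : Type*} (H : SimpleGraph α) (S : Set α) : ℕ :=
  Set.ncard {p : α × α | p.1 ∈ S ∧ p.2 ∉ S ∧ H.Adj p.1 p.2}

/-- The isoperimetric constant `Φ_H`. -/
noncomputable def isoConst {α : Type*} [Fintype α] (H : SimpleGraph α) : ℝ :=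
  sInf {r : ℝ | ∃ S : Set α, S.Nonempty ∧ degSum H S ≤ (H.edgeSet.ncard : ℝ) ∧
    r = (edgeBoundary H S : ℝ) / degSum H S}

/-- The generator of the continuous-time walk on the component with vertex set `S`, jumping at
rate `1/(n-1)` along every edge. -/
noncomputable def walkGen {n : ℕ} (G : SimpleGraph (Fin n)) (S : Set (Fin n)) :
    Matrix ↥S ↥S ℝ :=
  Matrix.of fun x y =>
    if x = y then -(((G.induce S).neighborSet x).ncard : ℝ) / ((n : ℝ) - 1)
    else if (G.induce S).Adj x y then 1 / ((n : ℝ) - 1) else 0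

open Finset Matrix

section Isoperimetry

variable {α : Type*} [Fintype α] (H : SimpleGraph α)

lemma ncard_neighborSet_eq_degree (x : α) : (H.neighborSet x).ncard = H.degree x := by
  rw [← SimpleGraph.card_neighborSet_eq_degree, ← Nat.card_eq_fintype_card, Nat.card_coe_set_eq]

lemma degSum_eq_sum (S : Set α) :
    degSum H S = ∑ x, if x ∈ S then (H.degree x : ℝ) else 0 := by
  simp_rw [degSum, ncard_neighborSet_eq_degree]

lemma degSum_empty : degSum H ∅ = 0 := by
  simp [degSum]

lemma degSum_nonneg (S : Set α) : 0 ≤ degSum H S := by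
  rw [degSum_eq_sum]; positivity

lemma degSum_mono {S T : Set α} (h : S ⊆ T) : degSum H S ≤ degSum H T := by
  simp_rw [degSum_eq_sum]
  refine sum_le_sum fun x _ => ?_
  by_cases hx : x ∈ S
  · simp [hx, h hx]
  · simp only [hx, if_false]; split_ifs <;> positivity

lemma degSum_add_degSum_compl (S : Set α) :
    degSum H S + degSum H Sᶜ = 2 * H.edgeSet.ncard := by
  rw [degSum_eq_sum, degSum_eq_sum, ← sum_add_distrib, ← Nat.card_coe_set_eq,
    Nat.card_eq_fintype_card, ← SimpleGraph.edgeFinset_card, ← Nat.cast_ofNat, ← Nat.cast_mul,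
    ← SimpleGraph.sum_degrees_eq_twice_card_edges, Nat.cast_sum]
  refine sum_congr rfl fun x _ => ?_
  by_cases hx : x ∈ S <;> simp [hx]

lemma two_mul_edgeBoundary_eq_sum (S : Set α) :
    2 * (edgeBoundary H S : ℝ) =
      ∑ u, ∑ v, if H.Adj u v ∧ (u ∈ S ↔ v ∉ S) then 1 else 0 := by
  have hsum : (edgeBoundary H S : ℝ) =
      ∑ u, ∑ v, if u ∈ S ∧ v ∉ S ∧ H.Adj u v then 1 else 0 := by
    rw [edgeBoundary, Set.ncard_eq_toFinset_card', Set.toFinset_ofPred, card_filter,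
      Nat.cast_sum, Fintype.sum_prod_type]
    push_cast; rfl
  have hswap : (edgeBoundary H S : ℝ) =
      ∑ u, ∑ v, if v ∈ S ∧ u ∉ S ∧ H.Adj u v then 1 else 0 := by
    rw [hsum, sum_comm]
    simp_rw [H.adj_comm]
  rw [two_mul]
  nth_rw 1 [hsum]
  rw [hswap, ← sum_add_distrib]
  refine sum_congr rfl fun u _ => ?_
  rw [← sum_add_distrib]
  refine sum_congr rfl fun v _ => ?_
  by_cases hu : u ∈ S <;> by_cases hv : v ∈ S <;> simp [hu, hv]

lemma sum_sum_ite_adj_left (g : α → ℝ) :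
    ∑ u, ∑ v, (if H.Adj u v then g u else 0) = ∑ u, (H.degree u : ℝ) * g u := by
  refine sum_congr rfl fun u _ => ?_
  rw [SimpleGraph.degree_eq_sum_if_adj (R := ℝ), sum_mul]
  exact sum_congr rfl fun v _ => by split_ifs <;> simp

lemma sum_sum_ite_adj_right (g : α → ℝ) :
    ∑ u, ∑ v, (if H.Adj u v then g v else 0) = ∑ u, (H.degree u : ℝ) * g u := by
  rw [sum_comm, ← sum_sum_ite_adj_left]
  simp_rw [H.adj_comm]

/-- `Φ_H ≥ φ` in multiplicative form: sets with `d_H(S) = 0`, whose ratio `isoConst` reads as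
`x / 0 = 0`, impose no constraint. -/
def IsIsoperimetric (φ : ℝ) : Prop :=
  ∀ S : Set α, degSum H S ≤ H.edgeSet.ncard → φ * degSum H S ≤ edgeBoundary H S

lemma isIsoperimetric_of_le_isoConst {φ : ℝ} (h : φ ≤ isoConst H) : IsIsoperimetric H φ := by
  intro S hS
  rcases S.eq_empty_or_nonempty with rfl | hne
  · simp [degSum_empty]
  rcases (degSum_nonneg H S).eq_or_lt with h0 | hpos
  · rw [← h0, mul_zero]; positivity
  have hbdd : BddBelow {r : ℝ | ∃ S : Set α, S.Nonempty ∧ degSum H S ≤ (H.edgeSet.ncard : ℝ) ∧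
      r = (edgeBoundary H S : ℝ) / degSum H S} := by
    refine ⟨0, ?_⟩
    rintro r ⟨T, -, -, rfl⟩
    exact div_nonneg (Nat.cast_nonneg _) (degSum_nonneg H T)
  rw [← le_div_iff₀ hpos]
  exact h.trans (csInf_le hbdd ⟨S, hne, hS, rfl⟩)

variable {H}

lemma sum_degree_mul_eq_sub_indicator (g : α → ℝ) (S : Set α) (m : ℝ) :
    ∑ v, (H.degree v : ℝ) * g v =
      ∑ v, (H.degree v : ℝ) * (g - S.indicator fun _ => m) v + m * degSum H S := by
  rw [degSum_eq_sum, mul_sum, ← sum_add_distrib]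
  refine sum_congr rfl fun v _ => ?_
  by_cases hv : v ∈ S <;> simp [hv]
  ring

lemma sum_adj_abs_sub_eq_sub_indicator {g : α → ℝ} {S : Set α} {m : ℝ} (hm0 : 0 ≤ m)
    (hm : ∀ v ∈ S, m ≤ g v) (hSc : ∀ v ∉ S, g v = 0) :
    (∑ u, ∑ v, if H.Adj u v then |g u - g v| else 0) =
      (∑ u, ∑ v, if H.Adj u v then
          |(g - S.indicator fun _ => m) u - (g - S.indicator fun _ => m) v| else 0) +
        m * (2 * edgeBoundary H S) := by
  rw [two_mul_edgeBoundary_eq_sum, mul_sum, ← sum_add_distrib]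
  refine sum_congr rfl fun u _ => ?_
  rw [mul_sum, ← sum_add_distrib]
  refine sum_congr rfl fun v _ => ?_
  by_cases hadj : H.Adj u v
  · by_cases hu : u ∈ S <;> by_cases hv : v ∈ S
    · simp [hadj, hu, hv]
    · simp [hadj, hu, hv, hSc v hv, abs_of_nonneg (hm0.trans (hm u hu)),
        abs_of_nonneg (sub_nonneg.2 (hm u hu))]
    · simp [hadj, hu, hv, hSc u hu, abs_of_nonneg (hm0.trans (hm v hv)),
        abs_of_nonpos (sub_nonpos.2 (hm v hv))]
    · simp [hadj, hu, hv, hSc u hu, hSc v hv]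
  · simp [hadj]

variable {φ : ℝ}

theorem IsIsoperimetric.two_mul_sum_degree_mul_le (hH : IsIsoperimetric H φ) {g : α → ℝ}
    (hg : 0 ≤ g) (hsupp : degSum H (Function.support g) ≤ H.edgeSet.ncard) :
    2 * φ * ∑ v, (H.degree v : ℝ) * g v ≤ ∑ u, ∑ v, if H.Adj u v then |g u - g v| else 0 := by
  -- induction on the support: subtracting the least value of `g` on it removes a vertex
  obtain ⟨k, hk⟩ : ∃ k, (Function.support g).ncard = k := ⟨_, rfl⟩
  induction k using Nat.strong_induction_on generalizing g with | _ k ih =>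
  set S := Function.support g
  rcases S.eq_empty_or_nonempty with hS | hS
  · rw [Function.support_eq_empty_iff.1 hS]
    simp
  obtain ⟨w, hwS, hmin⟩ := S.exists_min_image g S.toFinite hS
  set m := g w
  have hm0 : 0 < m := (hg w).lt_of_ne (Ne.symm hwS)
  have hm : ∀ v ∈ S, m ≤ g v := hmin
  have hSc : ∀ v ∉ S, g v = 0 := fun v hv => Function.notMem_support.1 hv
  set g' := g - S.indicator fun _ => m
  have hg' : 0 ≤ g' := fun v => by
    by_cases hv : v ∈ S <;> simp [g', hv, hm v, hSc v]
  have hsupp' : Function.support g' ⊂ S := by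
    refine (Set.ssubset_iff_of_subset fun v hv => ?_).2 ⟨w, hwS, by simp [g', hwS, m]⟩
    by_contra hvS
    simp [g', hvS, hSc v hvS] at hv
  have IH := ih _ (hk ▸ Set.ncard_lt_ncard hsupp') hg'
    ((degSum_mono H hsupp'.subset).trans hsupp) rfl
  rw [sum_degree_mul_eq_sub_indicator g S m, sum_adj_abs_sub_eq_sub_indicator hm0.le hm hSc]
  nlinarith [mul_le_mul_of_nonneg_left (hH S hsupp) hm0.le]

lemma sq_sum_adj_abs_sq_sub_sq_le (h : α → ℝ) :
    (∑ u, ∑ v, if H.Adj u v then |h u ^ 2 - h v ^ 2| else 0) ^ 2 ≤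
      (∑ u, ∑ v, if H.Adj u v then (h u - h v) ^ 2 else 0) *
        (4 * ∑ v, (H.degree v : ℝ) * h v ^ 2) := by
  set F : α × α → ℝ := fun p => if H.Adj p.1 p.2 then |h p.1 - h p.2| else 0
  set G : α × α → ℝ := fun p => if H.Adj p.1 p.2 then |h p.1 + h p.2| else 0
  have hFG : (∑ u, ∑ v, if H.Adj u v then |h u ^ 2 - h v ^ 2| else 0) = ∑ p, F p * G p := by
    rw [Fintype.sum_prod_type]
    refine sum_congr rfl fun u _ => sum_congr rfl fun v _ => ?_
    by_cases hadj : H.Adj u v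
    · simp [F, G, hadj, ← abs_mul, sq_sub_sq, mul_comm]
    · simp [F, G, hadj]
  have hF : ∑ p, F p ^ 2 = ∑ u, ∑ v, if H.Adj u v then (h u - h v) ^ 2 else 0 := by
    rw [Fintype.sum_prod_type]
    refine sum_congr rfl fun u _ => sum_congr rfl fun v _ => ?_
    by_cases hadj : H.Adj u v <;> simp [F, hadj]
  have hG : ∑ p, G p ^ 2 ≤ 4 * ∑ v, (H.degree v : ℝ) * h v ^ 2 := calc
    ∑ p, G p ^ 2 ≤ ∑ u, ∑ v, ((if H.Adj u v then 2 * h u ^ 2 else 0) +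
        (if H.Adj u v then 2 * h v ^ 2 else 0)) := by
      rw [Fintype.sum_prod_type]
      refine sum_le_sum fun u _ => sum_le_sum fun v _ => ?_
      by_cases hadj : H.Adj u v
      · simp only [G, hadj, if_true, sq_abs]
        nlinarith [sq_nonneg (h u - h v)]
      · simp [G, hadj]
    _ = 4 * ∑ v, (H.degree v : ℝ) * h v ^ 2 := by
      simp_rw [sum_add_distrib, sum_sum_ite_adj_left H (fun v => 2 * h v ^ 2),
        sum_sum_ite_adj_right H (fun v => 2 * h v ^ 2), ← sum_add_distrib, mul_sum]
      exact sum_congr rfl fun v _ => by ring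
  rw [hFG, ← hF]
  exact (sum_mul_sq_le_sq_mul_sq _ _ _).trans (by gcongr)

theorem IsIsoperimetric.sq_mul_sum_degree_mul_sq_le (hH : IsIsoperimetric H φ) (hφ : 0 ≤ φ)
    {h : α → ℝ} (hsupp : degSum H (Function.support h) ≤ H.edgeSet.ncard) :
    φ ^ 2 * ∑ v, (H.degree v : ℝ) * h v ^ 2 ≤
      ∑ u, ∑ v, if H.Adj u v then (h u - h v) ^ 2 else 0 := by
  set W := ∑ v, (H.degree v : ℝ) * h v ^ 2
  set D := ∑ u, ∑ v, if H.Adj u v then (h u - h v) ^ 2 else 0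
  have hcoarea : 2 * φ * W ≤ ∑ u, ∑ v, if H.Adj u v then |h u ^ 2 - h v ^ 2| else 0 :=
    hH.two_mul_sum_degree_mul_le (g := fun v => h v ^ 2) (fun v => sq_nonneg _)
      (by simpa [Function.support, pow_eq_zero_iff] using hsupp)
  have hsq : (2 * φ * W) ^ 2 ≤ D * (4 * W) :=
    (pow_le_pow_left₀ (by positivity) hcoarea 2).trans (sq_sum_adj_abs_sq_sub_sq_le h)
  rcases (show 0 ≤ W by positivity).eq_or_lt with hW | hW
  · rw [← hW, mul_zero]; positivity
  · nlinarith

variable (H) in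
lemma exists_degSum_lt_le_and_degSum_gt_le [Nonempty α] (f : α → ℝ) :
    ∃ c, degSum H {v | f v < c} ≤ H.edgeSet.ncard ∧ degSum H {v | c < f v} ≤ H.edgeSet.ncard := by
  -- `c` is the least value of `f` whose lower level set has at least half the total degree
  set A := univ.filter fun w => (H.edgeSet.ncard : ℝ) ≤ degSum H {v | f v ≤ f w}
  have hA : A.Nonempty := by
    obtain ⟨w, -, hw⟩ := exists_max_image univ f univ_nonempty
    refine ⟨w, mem_filter.2 ⟨mem_univ w, ?_⟩⟩
    have := degSum_add_degSum_compl H {v | f v ≤ f w}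
    have hempty : {v | f v ≤ f w}ᶜ = ∅ := by ext v; simpa using hw v (mem_univ v)
    rw [hempty, degSum_empty] at this
    linarith [show (0 : ℝ) ≤ H.edgeSet.ncard by positivity]
  obtain ⟨w₀, hw₀A, hw₀⟩ := exists_min_image A f hA
  refine ⟨f w₀, ?_, ?_⟩
  · rcases (univ.filter fun v => f v < f w₀).eq_empty_or_nonempty with hlt | hlt
    · have : {v | f v < f w₀} = ∅ := by
        ext v; simpa using (filter_eq_empty_iff.1 hlt) (mem_univ v)
      rw [this, degSum_empty]
      positivity
    obtain ⟨w₁, hw₁, hmax⟩ := exists_max_image _ f hlt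
    have hw₁' : f w₁ < f w₀ := (mem_filter.1 hw₁).2
    have : {v | f v < f w₀} = {v | f v ≤ f w₁} := by
      ext v
      exact ⟨fun hv => hmax v (mem_filter.2 ⟨mem_univ v, hv⟩), fun hv => hv.trans_lt hw₁'⟩
    rw [this]
    by_contra hcon
    exact (hw₀ w₁ (mem_filter.2 ⟨mem_univ w₁, (not_le.1 hcon).le⟩)).not_gt hw₁'
  · have := degSum_add_degSum_compl H {v | f v ≤ f w₀}
    have hcompl : {v | f v ≤ f w₀}ᶜ = {v | f w₀ < f v} := by ext v; simp
    rw [hcompl] at this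
    linarith [(mem_filter.1 hw₀A).2]

lemma sq_posPart_add_sq_negPart (a : ℝ) : a⁺ ^ 2 + a⁻ ^ 2 = a ^ 2 := by
  rcases le_total 0 a with ha | ha
  · simp [posPart_eq_self.2 ha, negPart_eq_zero.2 ha]
  · simp [posPart_eq_zero.2 ha, negPart_eq_neg.2 ha]

lemma sq_posPart_sub_add_sq_negPart_sub_le (a b : ℝ) :
    (a⁺ - b⁺) ^ 2 + (a⁻ - b⁻) ^ 2 ≤ (a - b) ^ 2 := by
  rcases le_total 0 a with ha | ha <;> rcases le_total 0 b with hb | hb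
  · simp [posPart_eq_self.2 ha, posPart_eq_self.2 hb, negPart_eq_zero.2 ha, negPart_eq_zero.2 hb]
  · simp [posPart_eq_self.2 ha, posPart_eq_zero.2 hb, negPart_eq_zero.2 ha, negPart_eq_neg.2 hb]
    nlinarith
  · simp [posPart_eq_zero.2 ha, posPart_eq_self.2 hb, negPart_eq_neg.2 ha, negPart_eq_zero.2 hb]
    nlinarith
  · simp [posPart_eq_zero.2 ha, posPart_eq_zero.2 hb, negPart_eq_neg.2 ha, negPart_eq_neg.2 hb]
    nlinarith

theorem IsIsoperimetric.exists_sq_mul_sum_degree_mul_sq_sub_le [Nonempty α]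
    (hH : IsIsoperimetric H φ) (hφ : 0 ≤ φ) (f : α → ℝ) :
    ∃ c, φ ^ 2 * ∑ v, (H.degree v : ℝ) * (f v - c) ^ 2 ≤
      ∑ u, ∑ v, if H.Adj u v then (f u - f v) ^ 2 else 0 := by
  obtain ⟨c, hlt, hgt⟩ := exists_degSum_lt_le_and_degSum_gt_le H f
  refine ⟨c, ?_⟩
  have hpos := hH.sq_mul_sum_degree_mul_sq_le hφ (h := fun v => (f v - c)⁺) <|
    (degSum_mono H fun v hv => by simpa [posPart_eq_zero] using hv).trans hgt
  have hneg := hH.sq_mul_sum_degree_mul_sq_le hφ (h := fun v => (f v - c)⁻) <|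
    (degSum_mono H fun v hv => by simpa [negPart_eq_zero] using hv).trans hlt
  calc φ ^ 2 * ∑ v, (H.degree v : ℝ) * (f v - c) ^ 2
      = φ ^ 2 * ∑ v, (H.degree v : ℝ) * (f v - c)⁺ ^ 2 +
          φ ^ 2 * ∑ v, (H.degree v : ℝ) * (f v - c)⁻ ^ 2 := by
        simp_rw [← mul_add, ← sum_add_distrib, ← mul_add, sq_posPart_add_sq_negPart]
    _ ≤ _ := add_le_add hpos hneg
    _ ≤ ∑ u, ∑ v, if H.Adj u v then (f u - f v) ^ 2 else 0 := by
        simp_rw [← sum_add_distrib]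
        refine sum_le_sum fun u _ => sum_le_sum fun v _ => ?_
        split_ifs
        · simpa using sq_posPart_sub_add_sq_negPart_sub_le (f u - c) (f v - c)
        · simp

theorem IsIsoperimetric.mul_sum_sq_le_dotProduct_lapMatrix_mulVec [Nonempty α]
    (hH : IsIsoperimetric H φ) (hφ : 0 ≤ φ) (hdeg : ∀ v, ¬H.IsIsolated v) {f : α → ℝ}
    (hf : ∑ v, f v = 0) :
    φ ^ 2 / 2 * ∑ v, f v ^ 2 ≤ f ⬝ᵥ (H.lapMatrix ℝ *ᵥ f) := by
  obtain ⟨c, hc⟩ := hH.exists_sq_mul_sum_degree_mul_sq_sub_le hφ f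
  have hmean : ∑ v, f v ^ 2 ≤ ∑ v, (f v - c) ^ 2 := by
    have : ∑ v, (f v - c) ^ 2 = ∑ v, f v ^ 2 + Fintype.card α * c ^ 2 := by
      simp only [sub_sq, sum_add_distrib, sum_sub_distrib, ← sum_mul, ← mul_sum, hf]
      simp
    rw [this]
    nlinarith [sq_nonneg c]
  have hdeg' : ∑ v, (f v - c) ^ 2 ≤ ∑ v, (H.degree v : ℝ) * (f v - c) ^ 2 :=
    sum_le_sum fun v _ => le_mul_of_one_le_left (sq_nonneg _) <| Nat.one_le_cast.2 <|
      (H.degree_pos_iff_mem_support v).2 (H.mem_support_iff_not_isIsolated.2 (hdeg v))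
  rw [← Matrix.toLinearMap₂'_apply', SimpleGraph.lapMatrix_toLinearMap₂']
  nlinarith [mul_le_mul_of_nonneg_left (hmean.trans hdeg') (sq_nonneg φ)]

end Isoperimetry

namespace Matrix.IsHermitian

variable {V : Type*} [Fintype V] {A : Matrix V V ℝ} (hA : A.IsHermitian)
include hA

lemma sum_mulVec_eq_zero (h1 : A *ᵥ (fun _ => 1) = 0) (g : V → ℝ) : ∑ x, (A *ᵥ g) x = 0 := by
  have hT : Aᵀ = A := by simpa [conjTranspose_eq_transpose_of_trivial] using hA.eq
  calc ∑ x, (A *ᵥ g) x = (fun _ => 1) ⬝ᵥ (A *ᵥ g) := by simp [dotProduct]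
    _ = (Aᵀ *ᵥ fun _ => 1) ⬝ᵥ g := by rw [dotProduct_mulVec, mulVec_transpose]
    _ = 0 := by rw [hT, h1, zero_dotProduct]

variable [DecidableEq V]

lemma exp_smul_apply (t : ℝ) (x y : V) :
    NormedSpace.exp (t • A) x y =
      ∑ i, Real.exp (t * hA.eigenvalues i) *
        (hA.eigenvectorBasis i x * hA.eigenvectorBasis i y) := by
  set U : Matrix V V ℝ := (hA.eigenvectorUnitary : Matrix V V ℝ)
  have hunit : IsUnit U := (Unitary.toUnits hA.eigenvectorUnitary).isUnit
  have hinv : U⁻¹ = star U := Matrix.inv_eq_left_inv (Unitary.coe_star_mul_self _)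
  have hsmul : t • A = U * diagonal (fun i => t * hA.eigenvalues i) * U⁻¹ := by
    conv_lhs => rw [hA.spectral_theorem, Unitary.conjStarAlgAut_apply]
    have : diagonal (fun i => t * hA.eigenvalues i) = t • diagonal hA.eigenvalues := by
      rw [← diagonal_smul]; rfl
    rw [hinv, this, Matrix.mul_smul, Matrix.smul_mul]
    rfl
  rw [hsmul, Matrix.exp_conj _ _ hunit, hinv, Matrix.exp_diagonal, Matrix.mul_apply]
  refine Finset.sum_congr rfl fun i _ => ?_
  simp [U, Matrix.mul_diagonal, Real.exp_eq_exp_ℝ]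
  ring

lemma sum_eigenvectorBasis_mul_eigenvectorBasis (x y : V) :
    ∑ i, hA.eigenvectorBasis i x * hA.eigenvectorBasis i y = if x = y then 1 else 0 := by
  have := congr_fun (congr_fun (Unitary.coe_mul_star_self hA.eigenvectorUnitary) x) y
  simpa [Matrix.mul_apply, Matrix.one_apply] using this

lemma sum_eigenvectorBasis_sq (i : V) : ∑ x, hA.eigenvectorBasis i x ^ 2 = 1 := by
  have := hA.eigenvectorBasis.orthonormal.1 i
  rw [EuclideanSpace.norm_eq, Real.sqrt_eq_one] at this
  simpa using this

variable (h1 : A *ᵥ (fun _ => 1) = 0) {γ : ℝ} (hγ : 0 < γ)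
  (hgap : ∀ f : V → ℝ, ∑ v, f v = 0 → γ * ∑ v, f v ^ 2 ≤ -(f ⬝ᵥ (A *ᵥ f)))
include h1 hγ hgap

lemma eigenvalues_le_or_eigenvectorBasis_eq_const (i : V) :
    hA.eigenvalues i ≤ -γ ∧ ∑ x, hA.eigenvectorBasis i x = 0 ∨
      hA.eigenvalues i = 0 ∧
        ∀ x, hA.eigenvectorBasis i x = (∑ y, hA.eigenvectorBasis i y) / Fintype.card V := by
  set u : V → ℝ := ⇑(hA.eigenvectorBasis i)
  set μ := hA.eigenvalues i
  set s := ∑ y, u y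
  have hAu : A *ᵥ u = μ • u := hA.mulVec_eigenvectorBasis i
  have hμs : μ * s = 0 := by
    rw [← hA.sum_mulVec_eq_zero h1 u, hAu, Finset.mul_sum]; rfl
  by_cases hs : s = 0
  · refine Or.inl ⟨?_, hs⟩
    have huu : u ⬝ᵥ u = 1 := by
      rw [← hA.sum_eigenvectorBasis_sq i]; simp [dotProduct, sq, u]
    have := hgap u hs
    rw [hA.sum_eigenvectorBasis_sq i, hAu, dotProduct_smul, huu, smul_eq_mul] at this
    linarith
  · have hμ : μ = 0 := (mul_eq_zero.1 hμs).resolve_right hs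
    refine Or.inr ⟨hμ, ?_⟩
    have : Nonempty V := ⟨i⟩
    have hN : (Fintype.card V : ℝ) ≠ 0 := Nat.cast_ne_zero.2 Fintype.card_ne_zero
    set g : V → ℝ := u - fun _ => s / Fintype.card V
    have hg : ∑ x, g x = 0 := by
      simp [g, Finset.sum_sub_distrib, s, mul_div_cancel₀ _ hN]
    have hAg : A *ᵥ g = 0 := by
      have : (fun _ : V => s / Fintype.card V) = (s / Fintype.card V) • fun _ => (1 : ℝ) := by
        ext; simp
      rw [mulVec_sub, hAu, hμ, zero_smul, this, mulVec_smul, h1, smul_zero, sub_zero]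
    have hg2 : ∑ x, g x ^ 2 = 0 := by
      have := hgap g hg
      rw [hAg, dotProduct_zero, neg_zero] at this
      exact le_antisymm (nonpos_of_mul_nonpos_right this hγ) (by positivity)
    intro x
    have := (Finset.sum_eq_zero_iff_of_nonneg fun x _ => sq_nonneg (g x)).1 hg2 x (mem_univ x)
    simpa [g, sub_eq_zero] using this

theorem abs_exp_smul_apply_sub_inv_card_le {t : ℝ} (ht : 0 ≤ t) (x y : V) :
    |NormedSpace.exp (t • A) x y - (Fintype.card V : ℝ)⁻¹| ≤ Real.exp (-(t * γ)) := by
  set u : V → V → ℝ := fun i => ⇑(hA.eigenvectorBasis i)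
  set N : ℝ := (Fintype.card V : ℝ)
  set s : V → ℝ := fun i => ∑ z, u i z
  -- Parseval for the constant vector `1`
  have hparseval : ∑ i, (s i / N) ^ 2 = N⁻¹ := by
    have : ∑ i, s i ^ 2 = N := calc
      ∑ i, s i ^ 2 = ∑ i, ∑ z, ∑ w, u i z * u i w := by simp only [s, sq, Finset.sum_mul_sum]
      _ = ∑ z, ∑ w, ∑ i, u i z * u i w := by
        rw [Finset.sum_comm]; exact Finset.sum_congr rfl fun z _ => Finset.sum_comm
      _ = N := by simp [u, N, hA.sum_eigenvectorBasis_mul_eigenvectorBasis]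
    rw [← div_self_mul_self', ← sq, ← this, Finset.sum_div]
    simp_rw [div_pow]
  have hterm : ∀ i, |Real.exp (t * hA.eigenvalues i) * (u i x * u i y) - (s i / N) ^ 2| ≤
      Real.exp (-(t * γ)) * (|u i x| * |u i y|) := by
    intro i
    rcases hA.eigenvalues_le_or_eigenvectorBasis_eq_const h1 hγ hgap i with ⟨hμ, hs⟩ | ⟨hμ, hu⟩
    · have : Real.exp (t * hA.eigenvalues i) ≤ Real.exp (-(t * γ)) := by
        rw [Real.exp_le_exp]; nlinarith
      simp only [s] at hs ⊢
      rw [hs, zero_div, sq, mul_zero, sub_zero, abs_mul, abs_mul, Real.abs_exp]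
      gcongr
    · simp only [u, s]
      rw [hμ, mul_zero, Real.exp_zero, one_mul, hu x, hu y, ← sq, sub_self, abs_zero]
      positivity
  have hcs : ∑ i, |u i x| * |u i y| ≤ 1 := by
    have hsq : ∀ z, ∑ i, |u i z| ^ 2 = 1 := fun z => by
      simpa [sq] using hA.sum_eigenvectorBasis_mul_eigenvectorBasis z z
    have := Finset.sum_mul_sq_le_sq_mul_sq univ (fun i => |u i x|) (fun i => |u i y|)
    rw [hsq, hsq, one_mul] at this
    exact (sq_le_one_iff₀ (by positivity)).1 this
  calc |NormedSpace.exp (t • A) x y - N⁻¹|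
      = |∑ i, (Real.exp (t * hA.eigenvalues i) * (u i x * u i y) - (s i / N) ^ 2)| := by
        rw [hA.exp_smul_apply, ← hparseval, Finset.sum_sub_distrib]
    _ ≤ ∑ i, Real.exp (-(t * γ)) * (|u i x| * |u i y|) :=
        (Finset.abs_sum_le_sum_abs _ _).trans (Finset.sum_le_sum fun i _ => hterm i)
    _ ≤ Real.exp (-(t * γ)) := by
        rw [← Finset.mul_sum]
        exact mul_le_of_le_one_right (Real.exp_pos _).le hcs

theorem abs_one_sub_card_mul_exp_smul_apply_le {ε : ℝ} (hε : 0 < ε)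
    (hεN : ε ≤ Fintype.card V) (x y : V) :
    |1 - Fintype.card V * NormedSpace.exp ((Real.log (Fintype.card V / ε) / γ) • A) x y| ≤ ε := by
  set N : ℝ := (Fintype.card V : ℝ)
  have hN : 0 < N := hε.trans_le hεN
  have ht : 0 ≤ Real.log (N / ε) / γ :=
    div_nonneg (Real.log_nonneg ((one_le_div hε).2 hεN)) hγ.le
  calc |1 - N * NormedSpace.exp ((Real.log (N / ε) / γ) • A) x y|
      = N * |NormedSpace.exp ((Real.log (N / ε) / γ) • A) x y - N⁻¹| := by
        rw [abs_sub_comm, ← abs_of_pos hN, ← abs_mul, mul_sub, abs_of_pos hN,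
          mul_inv_cancel₀ hN.ne']
    _ ≤ N * Real.exp (-(Real.log (N / ε) / γ * γ)) :=
        mul_le_mul_of_nonneg_left (hA.abs_exp_smul_apply_sub_inv_card_le h1 hγ hgap ht x y) hN.le
    _ = ε := by
        rw [div_mul_cancel₀ _ hγ.ne', Real.exp_neg, Real.exp_log (div_pos hN hε), inv_div,
          mul_div_cancel₀ _ hN.ne']

end Matrix.IsHermitian

section Walk

variable {n : ℕ} (G : SimpleGraph (Fin n)) (S : Set (Fin n)) [Fintype S]

lemma walkGen_eq_smul_lapMatrix :
    walkGen G S = (-(1 / ((n : ℝ) - 1))) • (G.induce S).lapMatrix ℝ := by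
  ext x y
  by_cases hxy : x = y
  · subst hxy
    simp only [walkGen, SimpleGraph.lapMatrix, SimpleGraph.degMatrix, ncard_neighborSet_eq_degree,
      of_apply, if_true, Matrix.smul_apply, Matrix.sub_apply, diagonal_apply_eq,
      SimpleGraph.adjMatrix_apply, SimpleGraph.irrefl, if_false, sub_zero, smul_eq_mul]
    rw [neg_mul, one_div, inv_mul_eq_div, neg_div]
    congr
  · by_cases hadj : G.Adj x y <;>
      simp [walkGen, SimpleGraph.lapMatrix, SimpleGraph.degMatrix, hxy, hadj]

lemma isHermitian_walkGen : (walkGen G S).IsHermitian := by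
  rw [walkGen_eq_smul_lapMatrix]
  exact (SimpleGraph.posSemidef_lapMatrix ℝ _).isHermitian.smul (IsSelfAdjoint.all _)

lemma walkGen_mulVec_one : walkGen G S *ᵥ (fun _ => 1) = 0 := by
  rw [walkGen_eq_smul_lapMatrix, smul_mulVec, SimpleGraph.lapMatrix_mulVec_const_eq_zero,
    smul_zero]

variable {G S}

theorem IsIsoperimetric.mul_sum_sq_le_neg_dotProduct_walkGen_mulVec [Nonempty S] {φ : ℝ}
    (hH : IsIsoperimetric (G.induce S) φ) (hφ : 0 ≤ φ) (hn : 1 < n)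
    (hdeg : ∀ v, ¬(G.induce S).IsIsolated v) {f : S → ℝ} (hf : ∑ v, f v = 0) :
    φ ^ 2 / 2 / ((n : ℝ) - 1) * ∑ v, f v ^ 2 ≤ -(f ⬝ᵥ (walkGen G S *ᵥ f)) := by
  have hn' : (0 : ℝ) < n - 1 := by
    rw [sub_pos]; exact_mod_cast hn
  rw [walkGen_eq_smul_lapMatrix, smul_mulVec, dotProduct_smul, smul_eq_mul, neg_mul, neg_neg,
    div_mul_eq_mul_div, div_le_iff₀ hn', one_div, inv_mul_eq_div, div_mul_cancel₀ _ hn'.ne']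
  refine (hH.mul_sum_sq_le_dotProduct_lapMatrix_mulVec hφ hdeg hf).trans_eq ?_
  congr
  exact Subsingleton.elim _ _

end Walk

lemma log_div_div_le_mul_log_pow_six {n N c : ℝ} (hn : 3 ≤ n) (hN : 0 < N) (hNn : N ≤ n)
    (hc : 0 < c) :
    Real.log (N / (1 / 8)) / ((c / Real.log n ^ 2) ^ 2 / 2 / (n - 1)) ≤
      8 / c ^ 2 * n * Real.log n ^ 6 := by
  set L := Real.log n
  have hL : 1 ≤ L := by
    rw [Real.le_log_iff_exp_le (by linarith)]
    linarith [Real.exp_one_lt_d9]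
  have hlog : Real.log (N / (1 / 8)) ≤ 4 * L := by
    have h8 : Real.log 8 ≤ 3 := by
      rw [show (8 : ℝ) = 2 ^ 3 by norm_num, Real.log_pow]
      norm_num
      linarith [Real.log_two_lt_d9]
    rw [div_div_eq_mul_div, div_one, Real.log_mul hN.ne' (by norm_num)]
    linarith [Real.log_le_log hN hNn]
  have hn1 : 0 < n - 1 := by linarith
  calc Real.log (N / (1 / 8)) / ((c / L ^ 2) ^ 2 / 2 / (n - 1))
      = Real.log (N / (1 / 8)) * (2 * (n - 1) * L ^ 4) / c ^ 2 := by field_simp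
    _ ≤ 4 * L * (2 * n * L ^ 4) / c ^ 2 := by gcongr; linarith
    _ = 8 / c ^ 2 * n * L ^ 5 := by ring
    _ ≤ 8 / c ^ 2 * n * L ^ 6 := by gcongr; norm_num

lemma SimpleGraph.ConnectedComponent.not_isIsolated_induce_supp {V : Type*} {G : SimpleGraph V}
    {C : G.ConnectedComponent} (hC : 1 < C.supp.ncard) (x : C.supp) :
    ¬(G.induce C.supp).IsIsolated x :=
  have : Nontrivial C.supp := (Set.one_lt_ncard_iff_nontrivial_and_finite.1 hC).1.coe_sort
  C.maximal_connected_induce_supp.1.preconnected.not_isIsolated x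

theorem static_walk_uniform_mixing_general (cs Cs : ℝ) (hcs : 0 < cs) :
    ∃ C : ℝ, 0 < C ∧ ∃ n₀ : ℕ, ∀ n : ℕ, n₀ ≤ n →
      ∀ (G : SimpleGraph (Fin n)) (v : Fin n),
        cs * n ≤ ((G.connectedComponentMk v).supp.ncard : ℝ) →
        (∀ x ∈ (G.connectedComponentMk v).supp,
          ((G.neighborSet x).ncard : ℝ) ≤ Cs * Real.log n) →
        cs / Real.log n ^ 2 ≤ isoConst (G.induce (G.connectedComponentMk v).supp) →
        ∃ t : ℝ, 0 ≤ t ∧ t ≤ C * n * Real.log n ^ 6 ∧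
          ∀ x y : ↥(G.connectedComponentMk v).supp,
            |1 - ((G.connectedComponentMk v).supp.ncard : ℝ) *
                NormedSpace.exp (t • walkGen G (G.connectedComponentMk v).supp) x y| ≤
              1 / 8 := by
  refine ⟨8 / cs ^ 2, by positivity, max 3 ⌈2 / cs⌉₊, fun n hn G v hsize _ hΦ => ?_⟩
  set C := G.connectedComponentMk v
  have : Nonempty C.supp := ⟨⟨v, rfl⟩⟩
  have hn3 : (3 : ℝ) ≤ n := by exact_mod_cast (le_max_left _ _).trans hn
  have hN : (Fintype.card C.supp : ℝ) = C.supp.ncard := by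
    rw [← Nat.card_coe_set_eq, Nat.card_eq_fintype_card]
  have hN2 : (2 : ℝ) ≤ C.supp.ncard := ((div_le_iff₀' hcs).1 <| (Nat.le_ceil _).trans <| by
    exact_mod_cast (le_max_right _ _).trans hn).trans hsize
  have hNn : (C.supp.ncard : ℝ) ≤ n := by exact_mod_cast (by simpa using Set.ncard_le_card C.supp)
  have hγ : 0 < (cs / Real.log n ^ 2) ^ 2 / 2 / ((n : ℝ) - 1) := by
    have : 0 < Real.log n := Real.log_pos (by linarith)
    have : (0 : ℝ) < n - 1 := by linarith
    positivity
  have hgap := fun f =>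
    (isIsoperimetric_of_le_isoConst _ hΦ).mul_sum_sq_le_neg_dotProduct_walkGen_mulVec (f := f)
      (by positivity) (by exact_mod_cast (by linarith : (1 : ℝ) < n))
      (C.not_isIsolated_induce_supp <| by exact_mod_cast (by linarith : (1 : ℝ) < C.supp.ncard))
  rw [← hN] at hN2 hNn ⊢
  refine ⟨_, div_nonneg (Real.log_nonneg ?_) hγ.le,
    log_div_div_le_mul_log_pow_six hn3 (by linarith) hNn hcs, fun x y => ?_⟩
  · rw [le_div_iff₀ (by norm_num)]; linarith
  exact (isHermitian_walkGen G C.supp).abs_one_sub_card_mul_exp_smul_apply_le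
    (walkGen_mulVec_one G C.supp) hγ hgap (ε := 1 / 8) (by norm_num) (by linarith) x y

/-- Uniform mixing of the static walk on a good giant: the `1/8`-uniform mixing time of the
rate-`1/(n-1)`-per-edge continuous-time walk on a component of size `≥ c⋆ n`, max degree
`≤ C⋆ log n` and isoperimetric constant `≥ c⋆ (log n)⁻²`, is at most `C n (log n)⁶`. -/
theorem static_walk_uniform_mixing (cs Cs : ℝ) (hcs : 0 < cs) (hCs : 0 < Cs) :
    ∃ C : ℝ, 0 < C ∧ ∃ n₀ : ℕ, ∀ n : ℕ, n₀ ≤ n →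
      ∀ (G : SimpleGraph (Fin n)) (v : Fin n),
        cs * n ≤ ((G.connectedComponentMk v).supp.ncard : ℝ) →
        (∀ x ∈ (G.connectedComponentMk v).supp,
          ((G.neighborSet x).ncard : ℝ) ≤ Cs * Real.log n) →
        cs / Real.log n ^ 2 ≤ isoConst (G.induce (G.connectedComponentMk v).supp) →
        ∃ t : ℝ, 0 ≤ t ∧ t ≤ C * n * Real.log n ^ 6 ∧
          ∀ x y : ↥(G.connectedComponentMk v).supp,
            |1 - ((G.connectedComponentMk v).supp.ncard : ℝ) *
                NormedSpace.exp (t • walkGen G (G.connectedComponentMk v).supp) x y| ≤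
              1 / 8 :=
  static_walk_uniform_mixing_general cs Cs hcs
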